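/- Every ℝ-linear isometric equivalence f : ℍ → ℍ whose determinant (as an ℝ-linear map) equals 1 is of the form f(x) = p * x * q⁻¹ for some unit quaternions p and q. That is, the homomorphism Sp(1) × Sp(1) → SO(4), (p,q) ↦ (x ↦ p x q⁻¹), is surjective onto the group of orientation-preserving linear isometries of ℍ. -/

import Mathlib

open Quaternion Matrix Submodule Module
open scoped InnerProductSpace

/-! Auxiliary lemmas -/

noncomputable def quatBasis : Basis (Fin 4) ℝ ℍ[ℝ] := QuaternionAlgebra.basisOneIJK (-1) 0 (-1)

lemma quatBasis_apply (j : Fin 4) :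
    quatBasis j = ![⟨1,0,0,0⟩, ⟨0,1,0,0⟩, ⟨0,0,1,0⟩, ⟨0,0,0,1⟩] j := by
  have : ⇑quatBasis = fun i => (QuaternionAlgebra.linearEquivTuple (-1:ℝ) 0 (-1)).symm
      (Pi.single i 1) := Basis.coe_ofEquivFun _
  rw [this]
  fin_cases j <;> ext <;>
    simp [QuaternionAlgebra.equivTuple, Pi.single_apply, Fin.ext_iff] <;> decide

lemma quatBasis_repr_apply (x : ℍ[ℝ]) (i : Fin 4) :
    quatBasis.repr x i = ![x.re, x.imI, x.imJ, x.imK] i :=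
  congrFun (QuaternionAlgebra.coe_basisOneIJK_repr (-1:ℝ) 0 (-1) x) i

lemma quatBasis_re (j : Fin 4) : (quatBasis j).re = ![1, 0, 0, 0] j := by
  rw [quatBasis_apply]; fin_cases j <;> rfl

lemma quatBasis_imI (j : Fin 4) : (quatBasis j).imI = ![0, 1, 0, 0] j := by
  rw [quatBasis_apply]; fin_cases j <;> rfl

lemma quatBasis_imJ (j : Fin 4) : (quatBasis j).imJ = ![0, 0, 1, 0] j := by
  rw [quatBasis_apply]; fin_cases j <;> rfl

lemma quatBasis_imK (j : Fin 4) : (quatBasis j).imK = ![0, 0, 0, 1] j := by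
  rw [quatBasis_apply]; fin_cases j <;> rfl

theorem myDet_fin_four (A : Matrix (Fin 4) (Fin 4) ℝ) : A.det =
    A 0 0 * (A 1 1 * (A 2 2 * A 3 3 - A 2 3 * A 3 2) - A 1 2 * (A 2 1 * A 3 3 - A 2 3 * A 3 1) + A 1 3 * (A 2 1 * A 3 2 - A 2 2 * A 3 1))
  - A 0 1 * (A 1 0 * (A 2 2 * A 3 3 - A 2 3 * A 3 2) - A 1 2 * (A 2 0 * A 3 3 - A 2 3 * A 3 0) + A 1 3 * (A 2 0 * A 3 2 - A 2 2 * A 3 0))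
  + A 0 2 * (A 1 0 * (A 2 1 * A 3 3 - A 2 3 * A 3 1) - A 1 1 * (A 2 0 * A 3 3 - A 2 3 * A 3 0) + A 1 3 * (A 2 0 * A 3 1 - A 2 1 * A 3 0))
  - A 0 3 * (A 1 0 * (A 2 1 * A 3 2 - A 2 2 * A 3 1) - A 1 1 * (A 2 0 * A 3 2 - A 2 2 * A 3 0) + A 1 2 * (A 2 0 * A 3 1 - A 2 1 * A 3 0)) := by
  rw [det_succ_row_zero]
  simp only [Fin.sum_univ_succ, Fin.sum_univ_zero, det_fin_three, submatrix_apply]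
  norm_num [Fin.succAbove, Fin.lt_def, Fin.ext_iff]
  simp only [show (Fin.succ 2 : Fin 4) = 3 from rfl,
    show ((2 : Fin 3).castSucc : Fin 4) = 2 from rfl]
  ring

lemma det_mulLeft (p : ℍ[ℝ]) : LinearMap.det (LinearMap.mulLeft ℝ p) = (normSq p)^2 := by
  rw [← LinearMap.det_toMatrix quatBasis, myDet_fin_four]
  simp only [LinearMap.toMatrix_apply, quatBasis_repr_apply,
    LinearMap.mulLeft_apply]
  simp [Quaternion.re_mul, Quaternion.imI_mul, Quaternion.imJ_mul,
    Quaternion.imK_mul, normSq_def', quatBasis_re, quatBasis_imI, quatBasis_imJ, quatBasis_imK]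
  ring

lemma det_mulRight (q : ℍ[ℝ]) : LinearMap.det (LinearMap.mulRight ℝ q) = (normSq q)^2 := by
  rw [← LinearMap.det_toMatrix quatBasis, myDet_fin_four]
  simp only [LinearMap.toMatrix_apply, quatBasis_repr_apply,
    LinearMap.mulRight_apply]
  simp [Quaternion.re_mul, Quaternion.imI_mul, Quaternion.imJ_mul,
    Quaternion.imK_mul, normSq_def', quatBasis_re, quatBasis_imI, quatBasis_imJ, quatBasis_imK]
  ring

noncomputable def conjL : ℍ[ℝ] →ₗ[ℝ] ℍ[ℝ] where
  toFun := star
  map_add' := star_add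
  map_smul' r x := by simp [Quaternion.star_smul]

lemma det_conjL : LinearMap.det conjL = -1 := by
  rw [← LinearMap.det_toMatrix quatBasis, myDet_fin_four]
  simp only [LinearMap.toMatrix_apply, quatBasis_repr_apply, conjL,
    LinearMap.coe_mk, AddHom.coe_mk]
  simp [Quaternion.re_star, Quaternion.imI_star, Quaternion.imJ_star,
    Quaternion.imK_star, quatBasis_re, quatBasis_imI, quatBasis_imJ, quatBasis_imK]

lemma re_mul_comm (a b : ℍ[ℝ]) : (a * b).re = (b * a).re := by
  simp only [Quaternion.re_mul]; ring

lemma quat_key {v : ℍ[ℝ]} (hv : ‖v‖ = 1) (x : ℍ[ℝ]) :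
    -(v * star x * v) = x - (2 * ⟪v, x⟫_ℝ) • v := by
  have h1 : v * star v = 1 := by
    rw [Quaternion.self_mul_star, Quaternion.normSq_eq_norm_mul_self, hv]
    norm_num
  have key : v * star x * v + x = (2 * ⟪v, x⟫_ℝ) • v := by
    calc v * star x * v + x = v * star x * v + (v * star v) * x := by rw [h1, one_mul]
    _ = v * (star x * v + star v * x) := by simp [mul_assoc, mul_add]
    _ = v * (star (star v * x) + star v * x) := by simp [mul_comm]
    _ = v * ((2 * (star v * x).re : ℝ) : ℍ[ℝ]) := by rw [Quaternion.star_add_self']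
    _ = (2 * (star v * x).re) • v := by rw [Quaternion.mul_coe_eq_smul]
    _ = (2 * ⟪v, x⟫_ℝ) • v := by
        congr 2
        rw [Quaternion.inner_def]
        simp only [Quaternion.re_mul, Quaternion.re_star, Quaternion.imI_star,
          Quaternion.imJ_star, Quaternion.imK_star]
        ring
  rw [← key]
  abel

lemma reflection_formula {v : ℍ[ℝ]} (hv : ‖v‖ = 1) (x : ℍ[ℝ]) :
    reflection (ℝ ∙ v)ᗮ x = -(v * star x * v) := by
  rw [quat_key hv, reflection_orthogonal_apply, reflection_singleton_apply, hv]
  norm_num [two_smul]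
  module

lemma prod_reflections (l : List ℍ[ℝ]) :
    (∃ p q : ℍ[ℝ], ‖p‖ = 1 ∧ ‖q‖ = 1 ∧
      ∀ x, ((l.map fun v => reflection (ℝ ∙ v)ᗮ).prod : ℍ[ℝ] ≃ₗᵢ[ℝ] ℍ[ℝ]) x = p * x * q) ∨
    (∃ p q : ℍ[ℝ], ‖p‖ = 1 ∧ ‖q‖ = 1 ∧
      ∀ x, ((l.map fun v => reflection (ℝ ∙ v)ᗮ).prod : ℍ[ℝ] ≃ₗᵢ[ℝ] ℍ[ℝ]) x = p * star x * q) := by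
  induction l with
  | nil => exact Or.inl ⟨1, 1, norm_one, norm_one, fun x => by simp⟩
  | cons v l ih =>
    have hprod : ∀ x : ℍ[ℝ],
        (((v :: l).map fun w => reflection (ℝ ∙ w)ᗮ).prod : ℍ[ℝ] ≃ₗᵢ[ℝ] ℍ[ℝ]) x =
        reflection (ℝ ∙ v)ᗮ
          (((l.map fun w => reflection (ℝ ∙ w)ᗮ).prod : ℍ[ℝ] ≃ₗᵢ[ℝ] ℍ[ℝ]) x) := by
      intro x
      rw [List.map_cons, List.prod_cons]
      rfl
    by_cases hv : v = 0
    · have hz : ∀ y : ℍ[ℝ], reflection (ℝ ∙ v)ᗮ y = y := by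
        intro y
        apply reflection_mem_subspace_eq_self
        rw [hv, Submodule.span_zero_singleton, Submodule.bot_orthogonal_eq_top]
        trivial
      rcases ih with ⟨p, q, hp, hq, h⟩ | ⟨p, q, hp, hq, h⟩
      · exact Or.inl ⟨p, q, hp, hq, fun x => by rw [hprod, hz, h]⟩
      · exact Or.inr ⟨p, q, hp, hq, fun x => by rw [hprod, hz, h]⟩
    · set u : ℍ[ℝ] := ‖v‖⁻¹ • v with hu
      have hnu : ‖u‖ = 1 := by
        rw [hu, norm_smul, norm_inv, norm_norm, inv_mul_cancel₀ (norm_ne_zero_iff.mpr hv)]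
      have hspan : (ℝ ∙ v) = ℝ ∙ u := by
        rw [hu, Submodule.span_singleton_smul_eq
          (IsUnit.mk0 _ (inv_ne_zero (norm_ne_zero_iff.mpr hv))) v]
      have hrefl : ∀ y : ℍ[ℝ], reflection (ℝ ∙ v)ᗮ y = -(u * star y * u) := by
        intro y
        have hre : reflection (ℝ ∙ v)ᗮ y = reflection (ℝ ∙ u)ᗮ y := by
          simp only [hspan]
        rw [hre]; exact reflection_formula hnu y
      rcases ih with ⟨p, q, hp, hq, h⟩ | ⟨p, q, hp, hq, h⟩
      · refine Or.inr ⟨-(u * star q), star p * u, ?_, ?_, fun x => ?_⟩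
        · rw [norm_neg, norm_mul, hnu, Quaternion.norm_star, hq, one_mul]
        · rw [norm_mul, Quaternion.norm_star, hp, hnu, one_mul]
        · rw [hprod, h, hrefl]
          simp only [StarMul.star_mul, star_star, neg_mul, mul_assoc]
      · refine Or.inl ⟨-(u * star q), star p * u, ?_, ?_, fun x => ?_⟩
        · rw [norm_neg, norm_mul, hnu, Quaternion.norm_star, hq, one_mul]
        · rw [norm_mul, Quaternion.norm_star, hp, hnu, one_mul]
        · rw [hprod, h, hrefl]
          simp only [StarMul.star_mul, star_star, neg_mul, mul_assoc]

/-- Every `ℝ`-linear isometric equivalence of `ℍ` with determinant `1`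
has the form `x ↦ p * x * q⁻¹` for some unit quaternions `p, q`:
the homomorphism `Sp(1) × Sp(1) → SO(4)` is surjective. -/
theorem surjective_onto_SO4 (f : ℍ[ℝ] ≃ₗᵢ[ℝ] ℍ[ℝ])
    (hf : LinearMap.det (f.toLinearEquiv : ℍ[ℝ] →ₗ[ℝ] ℍ[ℝ]) = 1) :
    ∃ p q : ℍ[ℝ], ‖p‖ = 1 ∧ ‖q‖ = 1 ∧ ∀ x : ℍ[ℝ], f x = p * x * q⁻¹ := by
  obtain ⟨l, -, hl⟩ := f.reflections_generate_dim
  rcases prod_reflections l with ⟨p, q, hp, hq, h⟩ | ⟨p, q, hp, hq, h⟩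
  · refine ⟨p, q⁻¹, hp, ?_, fun x => ?_⟩
    · rw [norm_inv, hq, inv_one]
    · rw [inv_inv, hl]; exact h x
  · exfalso
    have hcomp : (f.toLinearEquiv : ℍ[ℝ] →ₗ[ℝ] ℍ[ℝ]) =
        (LinearMap.mulLeft ℝ p).comp ((LinearMap.mulRight ℝ q).comp conjL) := by
      apply LinearMap.ext; intro x
      have hx : f x = p * star x * q := by rw [hl]; exact h x
      simpa [conjL, LinearMap.mulLeft_apply, LinearMap.mulRight_apply, mul_assoc] using hx
    rw [hcomp, LinearMap.det_comp, LinearMap.det_comp, det_mulLeft, det_mulRight,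
      det_conjL] at hf
    have hp2 : normSq p = 1 := by
      rw [Quaternion.normSq_eq_norm_mul_self, hp]; norm_num
    have hq2 : normSq q = 1 := by
      rw [Quaternion.normSq_eq_norm_mul_self, hq]; norm_num
    rw [hp2, hq2] at hf
    norm_num at hf
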